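/- arXiv:2003.09750 — 2 statements merged into one kernel-verified Lean document; each statement's English description precedes it below -/
import Mathlib

section
/- Let G be an essentially 4-connected graph and let Q be a cycle in G with |V(Q)| ≥ 5 such that every Q-bridge of G has at most three attachments. Then every component of G − V(Q) consists of a single vertex, whose degree in G is at most 3. If, in addition, every vertex of G has degree at least 3, then every Q-bridge of G with at least 3 vertices is isomorphic to K_{1,3}, and |V(Q)| = |V(G)| − b_G(Q). -/
open scoped Classical

namespace Paper

/-- An arc in the plane from `a` to `b`: a homeomorphic image of `[0,1]`
with endpoints `a` and `b`. -/
def IsArc (A : Set (ℝ × ℝ)) (a b : ℝ × ℝ) : Prop :=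
  ∃ f : ℝ → ℝ × ℝ, ContinuousOn f (Set.Icc 0 1) ∧ Set.InjOn f (Set.Icc 0 1) ∧
    f '' Set.Icc 0 1 = A ∧ f 0 = a ∧ f 1 = b

/-- A drawing of the graph `G` in the plane without crossings: vertices are mapped to
distinct points, each edge to an arc joining the images of its ends, arcs pass through
no vertex points other than their ends, and two distinct arcs meet only in images of
common end-vertices. -/
structure PlaneEmbedding {V : Type} (G : SimpleGraph V) where
  vmap : V → ℝ × ℝ
  vinj : Function.Injective vmap
  arc : Sym2 V → Set (ℝ × ℝ)
  arc_spec : ∀ u v : V, G.Adj u v → IsArc (arc s(u, v)) (vmap u) (vmap v)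
  arc_vertex : ∀ e ∈ G.edgeSet, ∀ w : V, vmap w ∈ arc e → w ∈ e
  arc_meet : ∀ e ∈ G.edgeSet, ∀ e' ∈ G.edgeSet, e ≠ e' →
    arc e ∩ arc e' ⊆ {p | ∃ w : V, w ∈ e ∧ w ∈ e' ∧ p = vmap w}

/-- The point set of a plane drawing. -/
def PlaneEmbedding.image {V : Type} {G : SimpleGraph V} (E : PlaneEmbedding G) :
    Set (ℝ × ℝ) :=
  Set.range E.vmap ∪ ⋃ e ∈ G.edgeSet, E.arc e

/-- A graph is planar if it admits a plane drawing. -/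
def IsPlanar {V : Type} (G : SimpleGraph V) : Prop := Nonempty (PlaneEmbedding G)

/-- `G` is `k`-connected: more than `k` vertices, and deleting fewer than `k`
vertices leaves a connected graph. -/
def IsKConnected {V : Type} [Fintype V] (k : ℕ) (G : SimpleGraph V) : Prop :=
  k < Fintype.card V ∧ ∀ S : Set V, S.ncard < k → (G.induce Sᶜ).Connected

/-- `G` is essentially 4-connected: it is connected and for every `S ⊆ V(G)` with
`|S| < 4`, `G − S` is connected or has exactly two components, one of which
has exactly one vertex. -/
def EssFourConnected {V : Type} [Fintype V] (G : SimpleGraph V) : Prop :=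
  G.Connected ∧ ∀ S : Set V, S.ncard < 4 →
    (G.induce Sᶜ).Connected ∨
      ∃ c₁ c₂ : (G.induce Sᶜ).ConnectedComponent, c₁ ≠ c₂ ∧
        (∀ c : (G.induce Sᶜ).ConnectedComponent, c = c₁ ∨ c = c₂) ∧
        (c₁.supp.ncard = 1 ∨ c₂.supp.ncard = 1)

/-- `S` is the vertex set of a connected component of `G − W`. -/
def IsCompOfComplement {V : Type} (G : SimpleGraph V) (W S : Set V) : Prop :=
  S.Nonempty ∧ Disjoint S W ∧ (G.induce S).Connected ∧
    ∀ u ∈ S, ∀ v : V, v ∉ W → G.Adj u v → v ∈ S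

/-- The subgraph of `G` induced by the edges of `G` incident with at least one vertex
of `S`. -/
def bridgeOf {V : Type} (G : SimpleGraph V) (S : Set V) : G.Subgraph where
  verts := S ∪ {v | ∃ u ∈ S, G.Adj u v}
  Adj a b := G.Adj a b ∧ (a ∈ S ∨ b ∈ S)
  adj_sub h := h.1
  edge_vert := by
    rintro a b ⟨hab, ha | hb⟩
    · exact Or.inl ha
    · exact Or.inr ⟨b, hb, hab.symm⟩
  symm := ⟨by rintro a b ⟨hab, h⟩; exact ⟨hab.symm, h.symm⟩⟩

/-- `B` is an `H`-bridge of `G`: either `B` is induced by a single edge of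
`E(G) ∖ E(H)` with both ends in `V(H)`, or `B` is induced by the edges of `G`
incident with at least one vertex of a single component of `G − H`. -/
def IsBridge {V : Type} (G : SimpleGraph V) (H B : G.Subgraph) : Prop :=
  (∃ (u v : V) (h : G.Adj u v), ¬ H.Adj u v ∧ u ∈ H.verts ∧ v ∈ H.verts ∧
      B = G.subgraphOfAdj h) ∨
    (∃ S : Set V, IsCompOfComplement G H.verts S ∧ B = bridgeOf G S)

/-- `b_G(H)`: the number of `H`-bridges of `G` with at least 3 vertices. -/
noncomputable def numBigBridges {V : Type} (G : SimpleGraph V) (H : G.Subgraph) : ℕ :=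
  Set.ncard {B : G.Subgraph | IsBridge G H B ∧ 3 ≤ B.verts.ncard}

/-- `H` is a Tutte subgraph of `G`: every `H`-bridge has at most three attachments. -/
def IsTutteSubgraph {V : Type} (G : SimpleGraph V) (H : G.Subgraph) : Prop :=
  ∀ B : G.Subgraph, IsBridge G H B → (B.verts ∩ H.verts).ncard ≤ 3

/-- `H` is an `F`-Tutte subgraph of `G` (`F` given by its edge set): `H` is a Tutte
subgraph and every `H`-bridge containing an edge of `F` has at most two attachments. -/
def IsTutteSubgraphWrt {V : Type} (G : SimpleGraph V) (F : Set (Sym2 V))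
    (H : G.Subgraph) : Prop :=
  IsTutteSubgraph G H ∧
    ∀ B : G.Subgraph, IsBridge G H B → (∃ e ∈ F, e ∈ B.edgeSet) →
      (B.verts ∩ H.verts).ncard ≤ 2

/-- The circumference of `G`: the length of a longest cycle. -/
noncomputable def circumference {V : Type} (G : SimpleGraph V) : ℕ :=
  sSup {k : ℕ | ∃ (r : V) (Q : G.Walk r r), Q.IsCycle ∧ Q.length = k}

/-- A cycle in `G` given with an orientation (referred to as the clockwise
orientation), presented as an injective cyclic enumeration `f : ZMod m → V`
of its vertices with consecutive vertices adjacent. -/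
structure OrientedCycle {V : Type} (G : SimpleGraph V) (m : ℕ) where
  f : ZMod m → V
  inj : Function.Injective f
  adj : ∀ i : ZMod m, G.Adj (f i) (f (i + 1))
  three_le : 3 ≤ m

/-- The vertex set of an oriented cycle. -/
def OrientedCycle.vertexSet {V : Type} {G : SimpleGraph V} {m : ℕ}
    (C : OrientedCycle G m) : Set V := Set.range C.f

/-- The edge set of an oriented cycle. -/
def OrientedCycle.edgeSet {V : Type} {G : SimpleGraph V} {m : ℕ}
    (C : OrientedCycle G m) : Set (Sym2 V) :=
  {e | ∃ i : ZMod m, e = s(C.f i, C.f (i + 1))}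

/-- `C` is the outer cycle of the drawing `E` of `G`: the drawing of `C` is the
frontier of the unbounded face (the unbounded connected component of the complement
of the drawing). -/
def OrientedCycle.IsOuterCycleOf {V : Type} {G : SimpleGraph V} {m : ℕ}
    (C : OrientedCycle G m) (E : PlaneEmbedding G) : Prop :=
  ∃ p : ℝ × ℝ, p ∉ E.image ∧
    ¬ Bornology.IsBounded (connectedComponentIn E.imageᶜ p) ∧
    frontier (connectedComponentIn E.imageᶜ p) =
      ⋃ i : ZMod m, E.arc s(C.f i, C.f (i + 1))

/-- A `k`-separation of `G`: a pair of edge-disjoint subgraphs covering `G`, neither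
contained in the other, whose vertex sets share exactly `k` vertices. -/
def IsKSeparation {V : Type} (G : SimpleGraph V) (k : ℕ) (G₁ G₂ : G.Subgraph) : Prop :=
  G₁ ⊔ G₂ = ⊤ ∧ Disjoint G₁.edgeSet G₂.edgeSet ∧
    (G₁.verts ∩ G₂.verts).ncard = k ∧ ¬ G₁ ≤ G₂ ∧ ¬ G₂ ≤ G₁

/-- A `k`-cut of `G`. -/
def IsKCut {V : Type} (G : SimpleGraph V) (k : ℕ) (T : Set V) : Prop :=
  T.ncard = k ∧ ∃ G₁ G₂ : G.Subgraph, IsKSeparation G k G₁ G₂ ∧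
    G₁.verts ∩ G₂.verts = T ∧ (G₁.verts \ G₂.verts).Nonempty ∧
    (G₂.verts \ G₁.verts).Nonempty

/-- `(G, C)` is a circuit graph: `G` is 2-connected, can be drawn in the plane with
outer cycle `C`, and every component of `G − T`, for every 2-cut `T`, contains a
vertex of `C`. -/
def IsCircuitGraph {V : Type} [Fintype V] (G : SimpleGraph V) {m : ℕ}
    (C : OrientedCycle G m) : Prop :=
  IsKConnected 2 G ∧ (∃ E : PlaneEmbedding G, C.IsOuterCycleOf E) ∧
    ∀ T : Set V, IsKCut G 2 T → ∀ S : Set V, IsCompOfComplement G T S →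
      ∃ i : ZMod m, C.f i ∈ S

/-- The clockwise segment of `C` from `C.f p` to `C.f q` (indices `p ≤ q` in `ℕ`,
taken mod `m`) is good: there is no 2-separation `(G₁,G₂)` of `G` with
`V(G₁ ∩ G₂) = {s,t}`, where `s = C.f i`, `t = C.f j` with `p ≤ i ≤ j ≤ q`,
the segment from `s` to `t` contained in `G₂`, and `|V(G₂)| ≥ 3`. -/
def SegGood {V : Type} {m : ℕ} (G : SimpleGraph V) (C : OrientedCycle G m)
    (p q : ℕ) : Prop :=
  ¬ ∃ (G₁ G₂ : G.Subgraph) (i j : ℕ), IsKSeparation G 2 G₁ G₂ ∧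
      p ≤ i ∧ i ≤ j ∧ j ≤ q ∧
      G₁.verts ∩ G₂.verts = {C.f (i : ZMod m), C.f (j : ZMod m)} ∧
      (∀ k : ℕ, i ≤ k → k ≤ j → C.f (k : ZMod m) ∈ G₂.verts) ∧
      (∀ k : ℕ, i ≤ k → k < j → G₂.Adj (C.f (k : ZMod m)) (C.f ((k : ZMod m) + 1))) ∧
      3 ≤ G₂.verts.ncard

/-- `τ_G(xy)` for `x`, `y` both vertices of `C` (`x = C.f p`, `y = C.f q`, `p ≤ q`
as natural numbers indexing clockwise): `2/3` if `xCy` is not good, `0` otherwise. -/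
noncomputable def tauVV {V : Type} {m : ℕ} (G : SimpleGraph V) (C : OrientedCycle G m)
    (p q : ℕ) : ℚ :=
  if SegGood G C p q then 0 else 2/3

/-- `τ_G(xy)` where exactly one of `x, y` is an edge of `C`; the underlying vertex
segment runs clockwise from `C.f p` to `C.f q` (`p ≤ q` as naturals), and the edge
of the pair is the edge of `C` attached at the appropriate end of this segment
(so `x` and `y` are incident iff `p = q`, and `|V(xCy)| = 2` iff `q = p + 1`):
`2/3` if the segment is not good; otherwise `2/3` if `x` and `y` are incident;
otherwise `1/3` if the segment has exactly two vertices; and `0` otherwise. -/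
noncomputable def tauVE {V : Type} {m : ℕ} (G : SimpleGraph V) (C : OrientedCycle G m)
    (p q : ℕ) : ℚ :=
  if ¬ SegGood G C p q then 2/3
  else if p = q then 2/3
  else if q = p + 1 then 1/3
  else 0

end Paper

/-!
The attachments `T` of a component `S` of `G − V(Q)` number at most three and separate `S` from
the (at least two) vertices of `V(Q) ∖ T`. Essential 4-connectivity then makes `S` the singleton
side of `G − T`, and its vertex has all its neighbours among the attachments. Under minimum
degree 3 every vertex off `Q` is thus an isolated vertex of `G − V(Q)` of degree exactly 3, so
the `Q`-bridges with at least three vertices are exactly the stars at these vertices.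
-/

lemma SimpleGraph.Reachable.mem_of_adj_closed {V : Type*} {G : SimpleGraph V} {A : Set V}
    (hA : ∀ u ∈ A, ∀ w, G.Adj u w → w ∈ A) {u v : V} (h : G.Reachable u v)
    (hu : u ∈ A) : v ∈ A := by
  obtain ⟨p⟩ := h
  induction p with
  | nil => exact hu
  | cons hadj _ ih => exact ih (hA _ hu _ hadj)

namespace Paper

open SimpleGraph

variable {V : Type} {G : SimpleGraph V}

lemma bridgeOf_singleton_verts (v : V) : (bridgeOf G {v}).verts = insert v (G.neighborSet v) := by
  ext w
  simp [bridgeOf]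

namespace IsCompOfComplement

variable {W S : Set V}

lemma subset_compl (hS : IsCompOfComplement G W S) : S ⊆ Wᶜ :=
  Set.subset_compl_iff_disjoint_right.mpr hS.2.1

lemma mem_iff_reachable (hS : IsCompOfComplement G W S) {s x : V} (hs : s ∈ S) (hx : x ∉ W) :
    x ∈ S ↔ (G.induce Wᶜ).Reachable ⟨s, hS.subset_compl hs⟩ ⟨x, hx⟩ := by
  refine ⟨fun hxS => ?_, fun h => ?_⟩
  · exact (hS.2.2.1.preconnected ⟨s, hs⟩ ⟨x, hxS⟩).map
      (induceHomOfLE G hS.subset_compl).toHom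
  · exact h.mem_of_adj_closed (A := {y : ↥Wᶜ | y.1 ∈ S})
      (fun u hu w huw => hS.2.2.2 u hu w w.2 huw) hs

lemma image_val_supp (hS : IsCompOfComplement G W S) {s : V} (hs : s ∈ S) :
    Subtype.val '' ((G.induce Wᶜ).connectedComponentMk ⟨s, hS.subset_compl hs⟩).supp = S := by
  ext x
  refine ⟨?_, fun hx => ⟨⟨x, hS.subset_compl hx⟩, ?_, rfl⟩⟩
  · rintro ⟨y, hy, rfl⟩
    exact (hS.mem_iff_reachable hs y.2).mpr (ConnectedComponent.exact hy).symm
  · exact ConnectedComponent.sound ((hS.mem_iff_reachable hs _).mp hx).symm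

lemma eq_of_mem (hS : IsCompOfComplement G W S) {S' : Set V} (hS' : IsCompOfComplement G W S')
    {s : V} (hs : s ∈ S) (hs' : s ∈ S') : S = S' := by
  rw [← hS.image_val_supp hs, ← hS'.image_val_supp hs']

lemma bridgeOf_verts_inter (hS : IsCompOfComplement G W S) :
    IsCompOfComplement G ((bridgeOf G S).verts ∩ W) S := by
  refine ⟨hS.1, hS.2.1.mono_right Set.inter_subset_right, hS.2.2.1, fun u hu w hw huw => ?_⟩
  by_contra hwS
  exact hw ⟨Or.inr ⟨u, hu, huw⟩, by_contra fun hwW => hwS (hS.2.2.2 u hu w hwW huw)⟩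

lemma neighborSet_subset {v : V} (hS : IsCompOfComplement G W {v}) : G.neighborSet v ⊆ W :=
  fun w hvw => by
    by_contra hw
    exact G.irrefl (hS.2.2.2 v rfl w hw hvw ▸ hvw)

lemma bridgeOf_singleton_verts_inter {v : V}
    (hS : IsCompOfComplement G W {v}) : (bridgeOf G {v}).verts ∩ W = G.neighborSet v := by
  rw [bridgeOf_singleton_verts, Set.insert_inter_of_notMem (hS.subset_compl rfl),
    Set.inter_eq_left.mpr hS.neighborSet_subset]

end IsCompOfComplement

lemma exists_isCompOfComplement_mem (W : Set V) {v : V} (hv : v ∉ W) :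
    ∃ S, IsCompOfComplement G W S ∧ v ∈ S := by
  set C := (G.induce Wᶜ).connectedComponentMk ⟨v, hv⟩
  have hconn : (G.induce (Subtype.val '' C.supp)).Connected :=
    C.connected_toSimpleGraph.map
      (⟨fun x => ⟨x.1.1, x.1, x.2, rfl⟩, fun h => h⟩ :
        C.toSimpleGraph →g G.induce (Subtype.val '' C.supp))
      (by rintro ⟨_, y, hy, rfl⟩; exact ⟨⟨y, hy⟩, rfl⟩)
  have hvC : v ∈ Subtype.val '' C.supp := ⟨⟨v, hv⟩, rfl, rfl⟩
  refine ⟨_, ⟨⟨v, hvC⟩, ?_, hconn, ?_⟩, hvC⟩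
  · exact Set.disjoint_left.mpr (by rintro _ ⟨y, _, rfl⟩; exact y.2)
  · rintro _ ⟨y, hy, rfl⟩ w hw huw
    have hyw : (G.induce Wᶜ).Adj y ⟨w, hw⟩ := huw
    exact ⟨⟨w, hw⟩, (C.mem_supp_congr_adj hyw).mp hy, rfl⟩

lemma EssFourConnected.ncard_eq_one_of_isCompOfComplement [Fintype V]
    (hess : EssFourConnected G)
    {T S : Set V} (hT : T.ncard < 4) (hS : IsCompOfComplement G T S) {x y : V} (hxy : x ≠ y)
    (hx : x ∉ S ∪ T) (hy : y ∉ S ∪ T) : S.ncard = 1 := by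
  obtain ⟨s, hs⟩ := hS.1
  rw [Set.mem_union, not_or] at hx hy
  set c := (G.induce Tᶜ).connectedComponentMk ⟨s, hS.subset_compl hs⟩
  set cx := (G.induce Tᶜ).connectedComponentMk ⟨x, hx.2⟩
  set cy := (G.induce Tᶜ).connectedComponentMk ⟨y, hy.2⟩
  have hcx : cx ≠ c := fun h =>
    hx.1 ((hS.mem_iff_reachable hs hx.2).mpr (ConnectedComponent.exact h).symm)
  have hcy : cy ≠ c := fun h =>
    hy.1 ((hS.mem_iff_reachable hs hy.2).mpr (ConnectedComponent.exact h).symm)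
  rcases hess.2 T hT with hconn | ⟨c₁, c₂, -, hall, hone⟩
  · exact absurd (ConnectedComponent.sound (hconn.preconnected _ _)) hcx
  have hc₀ := hall c
  have hcx₀ := hall cx
  have hcy₀ := hall cy
  -- `G − T` has only two components, so `x` and `y` share the one that does not contain `S`.
  have hcxy : cx = cy := by grind
  have hcx_two : 1 < cx.supp.ncard := (Set.one_lt_ncard_iff).mpr
    ⟨⟨x, hx.2⟩, ⟨y, hy.2⟩, rfl, hcxy.symm, fun h => hxy (congrArg Subtype.val h)⟩
  have hc : c.supp.ncard = 1 := by grind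
  rw [← hS.image_val_supp hs, Set.ncard_image_of_injective _ Subtype.val_injective, hc]

lemma EssFourConnected.exists_eq_singleton_of_isCompOfComplement [Fintype V]
    (hess : EssFourConnected G) {W S : Set V} (hW : 5 ≤ W.ncard) (hS : IsCompOfComplement G W S)
    (hatt : ((bridgeOf G S).verts ∩ W).ncard ≤ 3) : ∃ v, S = {v} := by
  have hT := hS.bridgeOf_verts_inter
  have hTW : (bridgeOf G S).verts ∩ W ⊆ W := Set.inter_subset_right
  generalize (bridgeOf G S).verts ∩ W = T at hT hTW hatt
  have hWT : 1 < (W \ T).ncard := by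
    rw [Set.ncard_sdiff hTW]
    omega
  obtain ⟨x, hx, y, hy, hxy⟩ := (Set.one_lt_ncard).mp hWT
  have hWT_out : ∀ z ∈ W \ T, z ∉ S ∪ T := by
    rintro z ⟨hzW, hzT⟩ (hzS | hzT')
    exacts [Set.disjoint_left.mp hS.2.1 hzS hzW, hzT hzT']
  exact Set.ncard_eq_one.mp <| hess.ncard_eq_one_of_isCompOfComplement (by omega) hT
    hxy (hWT_out x hx) (hWT_out y hy)

noncomputable def bridgeOfSingletonIso (v : V) :
    completeBipartiteGraph Unit (G.neighborSet v) ≃g (bridgeOf G {v}).coe where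
  toEquiv := (Equiv.sumComm _ _).trans <|
    (Equiv.Set.insert G.notMem_neighborSet_self).symm.trans
      (Equiv.setCongr (bridgeOf_singleton_verts v).symm)
  map_rel_iff' := by
    rintro (⟨⟩ | ⟨w, hw : G.Adj v w⟩) (⟨⟩ | ⟨w', hw' : G.Adj v w'⟩) <;>
      simp only [Equiv.trans_apply, Equiv.sumComm_apply, Sum.swap_inl, Sum.swap_inr,
        Equiv.Set.insert_symm_apply_inr, Equiv.Set.insert_symm_apply_inl, Equiv.setCongr_apply] <;>
      simp only [bridgeOf, Subgraph.coe_adj, completeBipartiteGraph_adj, Sum.isLeft_inl,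
        Sum.isLeft_inr, Sum.isRight_inl, Sum.isRight_inr]
    · simp
    · simpa using hw'
    · simpa using hw.symm
    · simp [hw.ne', hw'.ne']

lemma nonempty_bridgeOf_singleton_iso_of_ncard_neighborSet_eq_three {v : V}
    (hv : (G.neighborSet v).ncard = 3) :
    Nonempty ((bridgeOf G {v}).coe ≃g completeBipartiteGraph (Fin 1) (Fin 3)) := by
  have : Finite (G.neighborSet v) := (Set.finite_of_ncard_pos (by omega)).to_subtype
  exact ⟨(bridgeOfSingletonIso v).symm.trans
    (completeBipartiteGraphCongr (Equiv.ofUnique _ _) (Finite.equivFinOfCardEq hv))⟩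

section SingletonComponents

variable {H : G.Subgraph} (hsingle : ∀ v ∉ H.verts, IsCompOfComplement G H.verts {v})
  (hdeg : ∀ v ∉ H.verts, 2 ≤ (G.neighborSet v).ncard)
include hsingle hdeg

lemma isBridge_and_three_le_ncard_iff {B : G.Subgraph} :
    IsBridge G H B ∧ 3 ≤ B.verts.ncard ↔ ∃ v ∉ H.verts, bridgeOf G {v} = B := by
  constructor
  · rintro ⟨⟨u, w, huw, -, -, -, rfl⟩ | ⟨S, hS, rfl⟩, h3⟩
    · have : ({u, w} : Set V).ncard ≤ 2 := (Set.ncard_insert_le _ _).trans (by simp)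
      simp only [subgraphOfAdj_verts] at h3
      omega
    · obtain ⟨s, hs⟩ := hS.1
      have hsH : s ∉ H.verts := hS.subset_compl hs
      exact ⟨s, hsH, by rw [(hsingle s hsH).eq_of_mem hS rfl hs]⟩
  · rintro ⟨v, hv, rfl⟩
    have hfin : (G.neighborSet v).Finite := Set.finite_of_ncard_pos (by linarith [hdeg v hv])
    refine ⟨Or.inr ⟨{v}, hsingle v hv, rfl⟩, ?_⟩
    rw [bridgeOf_singleton_verts, Set.ncard_insert_of_notMem G.notMem_neighborSet_self hfin]
    linarith [hdeg v hv]

lemma numBigBridges_eq_ncard_compl : numBigBridges G H = H.vertsᶜ.ncard := by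
  have himage :
      {B | IsBridge G H B ∧ 3 ≤ B.verts.ncard} = (fun v => bridgeOf G {v}) '' H.vertsᶜ := by
    ext B
    exact isBridge_and_three_le_ncard_iff hsingle hdeg
  rw [numBigBridges, himage, Set.InjOn.ncard_image]
  intro a ha b hb hab
  have hab' : a ∈ insert b (G.neighborSet b) := by
    rw [← bridgeOf_singleton_verts, ← show bridgeOf G {a} = bridgeOf G {b} from hab]
    exact Or.inl rfl
  exact hab'.resolve_right fun h => ha ((hsingle b hb).neighborSet_subset h)

end SingletonComponents

theorem bridges_of_tutte_cycle_in_essentially_four_connected_general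
    {V : Type} [Fintype V] (G : SimpleGraph V)
    (hess : EssFourConnected G)
    {r : V} (Q : G.Walk r r)
    (hQ5 : 5 ≤ {v : V | v ∈ Q.support}.ncard)
    (hatt : ∀ B : G.Subgraph, IsBridge G Q.toSubgraph B →
      (B.verts ∩ Q.toSubgraph.verts).ncard ≤ 3) :
    (∀ S : Set V, IsCompOfComplement G {v : V | v ∈ Q.support} S →
      ∃ v : V, S = {v} ∧ (G.neighborSet v).ncard ≤ 3) ∧
    ((∀ v : V, 3 ≤ (G.neighborSet v).ncard) →
      (∀ B : G.Subgraph, IsBridge G Q.toSubgraph B → 3 ≤ B.verts.ncard →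
        Nonempty (B.coe ≃g completeBipartiteGraph (Fin 1) (Fin 3))) ∧
      {v : V | v ∈ Q.support}.ncard = Fintype.card V - numBigBridges G Q.toSubgraph) := by
  rw [← Q.verts_toSubgraph] at hQ5 ⊢
  set W := Q.toSubgraph.verts
  have hsingleton : ∀ S, IsCompOfComplement G W S → ∃ v, S = {v} := fun S hS =>
    hess.exists_eq_singleton_of_isCompOfComplement hQ5 hS (hatt _ (Or.inr ⟨S, hS, rfl⟩))
  have hdeg_le : ∀ v, IsCompOfComplement G W {v} → (G.neighborSet v).ncard ≤ 3 := fun v hv =>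
    hv.bridgeOf_singleton_verts_inter ▸ hatt _ (Or.inr ⟨{v}, hv, rfl⟩)
  refine ⟨fun S hS => ?_, fun hdeg => ?_⟩
  · obtain ⟨v, rfl⟩ := hsingleton S hS
    exact ⟨v, rfl, hdeg_le v hS⟩
  have hsingle : ∀ v ∉ W, IsCompOfComplement G W {v} := fun v hv => by
    obtain ⟨S, hS, hvS⟩ := exists_isCompOfComplement_mem W hv
    obtain ⟨u, rfl⟩ := hsingleton S hS
    rwa [Set.mem_singleton_iff.mp hvS]
  have hdeg2 : ∀ v ∉ W, 2 ≤ (G.neighborSet v).ncard := fun v _ =>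
    (hdeg v).trans' (by norm_num)
  refine ⟨fun B hB hB3 => ?_, ?_⟩
  · obtain ⟨v, hv, rfl⟩ := (isBridge_and_three_le_ncard_iff hsingle hdeg2).mp ⟨hB, hB3⟩
    exact nonempty_bridgeOf_singleton_iso_of_ncard_neighborSet_eq_three
      ((hdeg_le v (hsingle v hv)).antisymm (hdeg v))
  · rw [numBigBridges_eq_ncard_compl hsingle hdeg2, ← Nat.card_eq_fintype_card,
      ← Set.ncard_add_ncard_compl W, Nat.add_sub_cancel]

/-- Let `G` be an essentially 4-connected graph and let `Q` be a cycle in `G` with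
`|V(Q)| ≥ 5` such that every `Q`-bridge of `G` has at most three attachments.  Then
every component of `G − V(Q)` consists of a single vertex whose degree in `G` is at
most 3.  If, in addition, every vertex of `G` has degree at least 3, then every
`Q`-bridge of `G` with at least 3 vertices is isomorphic to `K_{1,3}`, and
`|V(Q)| = |V(G)| − b_G(Q)`. -/
theorem bridges_of_tutte_cycle_in_essentially_four_connected
    {V : Type} [Fintype V] [DecidableEq V] (G : SimpleGraph V)
    (hess : EssFourConnected G)
    {r : V} (Q : G.Walk r r) (hQ : Q.IsCycle)
    (hQ5 : 5 ≤ {v : V | v ∈ Q.support}.ncard)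
    (hatt : ∀ B : G.Subgraph, IsBridge G Q.toSubgraph B →
      (B.verts ∩ Q.toSubgraph.verts).ncard ≤ 3) :
    (∀ S : Set V, IsCompOfComplement G {v : V | v ∈ Q.support} S →
      ∃ v : V, S = {v} ∧ (G.neighborSet v).ncard ≤ 3) ∧
    ((∀ v : V, 3 ≤ (G.neighborSet v).ncard) →
      (∀ B : G.Subgraph, IsBridge G Q.toSubgraph B → 3 ≤ B.verts.ncard →
        Nonempty (B.coe ≃g completeBipartiteGraph (Fin 1) (Fin 3))) ∧
      {v : V | v ∈ Q.support}.ncard = Fintype.card V - numBigBridges G Q.toSubgraph) :=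
  bridges_of_tutte_cycle_in_essentially_four_connected_general G hess Q hQ5 hatt

end Paper
end

section
/- Let (G,C) be a circuit graph and let (G₁,G₂) be a 2-separation of G with V(G₁ ∩ G₂) = {x,y} ⊆ V(C) such that xCy ⊆ G₁ and yCx ⊆ G₂. For i = 1,2 let G_i' = G_i + xy (adding the edge xy if it is not already present), drawn as a plane graph with outer cycle C₁ = xCy + yx for i = 1 and C₂ = yCx + xy for i = 2. Then (G₁',C₁) and (G₂',C₂) are circuit graphs. -/
/-!
Restrict a drawing of `G` with outer cycle `C` to `G₁` and draw the new edge `xy` along the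
drawing of the path `yCx`: this path lies in `G₂`, so it meets the drawing of `G₁` only in
`x` and `y`. The new drawing lies inside the old one and the drawing of `C₁` is the drawing of
`C`, which is the frontier of the outer face; hence the outer face does not change and `C₁`
bounds it. `G₁ + xy` is 2-connected because contracting `G − G₁` onto `x` or `y` maps `G − S`
onto `G₁ + xy − S`. A component of `G₁ + xy − T` without a vertex of `C₁` misses `x`, `y` and
all of `C`, so it is also a component of `G − T` for the 2-cut `T`, against `(G, C)` being a
circuit graph. The second side is the first one for `C` rotated to start at `y`.
-/

open scoped Classical

lemma Path.injective_trans {X : Type*} [TopologicalSpace X] {x y z : X} {γ : Path x y}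
    {δ : Path y z} (hγ : Function.Injective γ) (hδ : Function.Injective δ)
    (hγδ : Set.range γ ∩ Set.range δ ⊆ {y}) : Function.Injective (γ.trans δ) := by
  have hδγ : ∀ u, δ u ∈ Set.range γ → (u : ℝ) = 0 := fun u hu =>
    congrArg Subtype.val (hδ ((hγδ ⟨hu, u, rfl⟩).trans δ.source.symm))
  intro s t hst
  simp only [Path.trans_apply] at hst
  split_ifs at hst with hs ht ht
  · simpa [Subtype.ext_iff] using hγ hst
  · linarith [hδγ _ ⟨_, hst⟩]
  · linarith [hδγ _ ⟨_, hst.symm⟩]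
  · simpa [Subtype.ext_iff] using hδ hst

lemma connectedComponentIn_compl_eq_of_frontier_subset {X : Type*} [TopologicalSpace X]
    [LocallyConnectedSpace X] {K K' : Set X} {p : X} (hK : IsClosed K) (hK' : K' ⊆ K)
    (hp : p ∉ K) (hfr : frontier (connectedComponentIn Kᶜ p) ⊆ K') :
    connectedComponentIn K'ᶜ p = connectedComponentIn Kᶜ p := by
  refine subset_antisymm ?_ (connectedComponentIn_mono p (Set.compl_subset_compl.2 hK'))
  have hU : IsOpen (connectedComponentIn Kᶜ p) := hK.isOpen_compl.connectedComponentIn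
  refine isPreconnected_connectedComponentIn.subset_of_closure_inter_subset hU
    ⟨p, mem_connectedComponentIn (fun h => hp (hK' h)), mem_connectedComponentIn hp⟩ ?_
  rintro z ⟨hzcl, hz⟩
  by_contra hzU
  exact connectedComponentIn_subset _ _ hz (hfr ⟨hzcl, by rwa [hU.interior_eq]⟩)

lemma SimpleGraph.Connected.of_surjective_of_reachable {V W : Type*} {G : SimpleGraph V}
    {G' : SimpleGraph W} (hG : G.Connected) (f : V → W) (hf : Function.Surjective f)
    (hadj : ∀ a b, G.Adj a b → G'.Reachable (f a) (f b)) : G'.Connected := by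
  have : Nonempty W := hG.nonempty.map f
  refine (SimpleGraph.connected_iff _).2 ⟨fun u v => ?_, this⟩
  obtain ⟨a, rfl⟩ := hf u
  obtain ⟨b, rfl⟩ := hf v
  simp only [SimpleGraph.reachable_iff_reflTransGen] at hadj ⊢
  exact Relation.ReflTransGen.lift' f hadj a b
    ((SimpleGraph.reachable_iff_reflTransGen a b).1 (hG.preconnected a b))

lemma Set.iUnion_zmod_eq_biUnion_range {α : Type*} {n : ℕ} [NeZero n] (s : ZMod n → Set α) :
    ⋃ i, s i = ⋃ k ∈ Finset.range n, s k := by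
  ext p
  simp only [Set.mem_iUnion, Finset.mem_range]
  exact ⟨fun ⟨i, hi⟩ => ⟨i.val, i.val_lt, by rwa [ZMod.natCast_zmod_val]⟩,
    fun ⟨k, _, hk⟩ => ⟨k, hk⟩⟩

lemma Set.biUnion_range_eq_union_of_le {α : Type*} (s : ℕ → Set α) {a n : ℕ} (h : a ≤ n) :
    ⋃ k ∈ Finset.range n, s k =
      (⋃ k ∈ Finset.range a, s k) ∪ ⋃ k ∈ Finset.range (n - a), s (a + k) := by
  ext p
  simp only [Set.mem_union, Set.mem_iUnion, Finset.mem_range]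
  constructor
  · rintro ⟨k, hk, hp⟩
    by_cases hka : k < a
    · exact Or.inl ⟨k, hka, hp⟩
    · exact Or.inr ⟨k - a, by omega, by rwa [Nat.add_sub_cancel' (by omega)]⟩
  · rintro (⟨k, hk, hp⟩ | ⟨k, hk, hp⟩)
    exacts [⟨k, by omega, hp⟩, ⟨a + k, by omega, hp⟩]

namespace Paper

section Arc

variable {A B : Set (ℝ × ℝ)} {a b c : ℝ × ℝ}

lemma isArc_iff_exists_path :
    IsArc A a b ↔ ∃ γ : Path a b, Function.Injective γ ∧ Set.range γ = A := by
  constructor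
  · rintro ⟨f, hf, hinj, rfl, rfl, rfl⟩
    refine ⟨⟨⟨fun t => f t, hf.comp_continuous continuous_subtype_val Subtype.prop⟩, rfl,
      rfl⟩, fun s t h => Subtype.ext (hinj s.2 t.2 h), ?_⟩
    ext p
    simp
  · rintro ⟨γ, hinj, rfl⟩
    refine ⟨γ.extend, γ.continuous_extend.continuousOn, ?_, ?_, γ.extend_zero, γ.extend_one⟩
    · intro s hs t ht h
      rw [γ.extend_apply hs, γ.extend_apply ht] at h
      exact congrArg Subtype.val (hinj h)
    · ext p
      constructor
      · rintro ⟨t, ht, rfl⟩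
        exact ⟨⟨t, ht⟩, (γ.extend_apply ht).symm⟩
      · rintro ⟨t, rfl⟩
        exact ⟨t, t.2, γ.extend_extends' t⟩

lemma IsArc.isClosed (h : IsArc A a b) : IsClosed A := by
  obtain ⟨γ, -, rfl⟩ := isArc_iff_exists_path.1 h
  exact (isCompact_range γ.continuous).isClosed

lemma IsArc.symm (h : IsArc A a b) : IsArc A b a := by
  obtain ⟨γ, hinj, rfl⟩ := isArc_iff_exists_path.1 h
  exact isArc_iff_exists_path.2
    ⟨γ.symm, hinj.comp unitInterval.symm_involutive.injective, γ.symm_range⟩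

lemma IsArc.union (hA : IsArc A a b) (hB : IsArc B b c) (hAB : A ∩ B ⊆ {b}) :
    IsArc (A ∪ B) a c := by
  obtain ⟨γ, hγ, rfl⟩ := isArc_iff_exists_path.1 hA
  obtain ⟨δ, hδ, rfl⟩ := isArc_iff_exists_path.1 hB
  exact isArc_iff_exists_path.2
    ⟨γ.trans δ, Path.injective_trans hγ hδ hAB, γ.trans_range δ⟩

lemma isArc_biUnion_range {p : ℕ → ℝ × ℝ} {B : ℕ → Set (ℝ × ℝ)} {n : ℕ}
    (hn : 0 < n)
    (hB : ∀ k < n, IsArc (B k) (p k) (p (k + 1)))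
    (hBB : ∀ k l, k < l → l < n → B k ∩ B l ⊆ {p l}) :
    IsArc (⋃ k ∈ Finset.range n, B k) (p 0) (p n) := by
  induction n, hn using Nat.le_induction with
  | base => simpa using hB 0 one_pos
  | succ n hn ih =>
    rw [Finset.range_add_one, Finset.set_biUnion_insert, Set.union_comm]
    refine (ih (fun k hk => hB k (by omega)) fun k l hkl hl => hBB k l hkl (by omega)).union
      (hB n (by omega)) ?_
    rintro z ⟨hz, hzn⟩
    obtain ⟨k, hk, hzk⟩ := Set.mem_iUnion₂.1 hz
    exact hBB k n (Finset.mem_range.1 hk) (by omega) ⟨hzk, hzn⟩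

end Arc

section Embedding

variable {V : Type} {G : SimpleGraph V}

lemma PlaneEmbedding.isClosed_image [Finite V] (E : PlaneEmbedding G) : IsClosed E.image := by
  refine (Set.finite_range _).isClosed.union (G.edgeSet.toFinite.isClosed_biUnion ?_)
  intro e he
  induction e using Sym2.ind with
  | h u v => exact (E.arc_spec u v he).isClosed

lemma PlaneEmbedding.arc_subset_image (E : PlaneEmbedding G) {e : Sym2 V} (he : e ∈ G.edgeSet) :
    E.arc e ⊆ E.image :=
  fun _ hp => Or.inr (Set.mem_biUnion he hp)

lemma OrientedCycle.IsOuterCycleOf.of_image_subset [Finite V] {V' : Type} {G' : SimpleGraph V'}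
    {m m' : ℕ} {C : OrientedCycle G m} {C' : OrientedCycle G' m'} {E : PlaneEmbedding G}
    {E' : PlaneEmbedding G'} (hC : C.IsOuterCycleOf E) (hsub : E'.image ⊆ E.image)
    (hcyc : ⋃ i, E'.arc s(C'.f i, C'.f (i + 1)) = ⋃ i, E.arc s(C.f i, C.f (i + 1))) :
    C'.IsOuterCycleOf E' := by
  obtain ⟨p, hp, hunb, hfr⟩ := hC
  have hcomp := connectedComponentIn_compl_eq_of_frontier_subset E.isClosed_image hsub hp
    (by rw [hfr, ← hcyc]; exact Set.iUnion_subset fun i => E'.arc_subset_image (C'.adj i))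
  exact ⟨p, fun h => hp (hsub h), by rwa [hcomp], by rw [hcomp, hfr, hcyc]⟩

end Embedding

section PlusEdge

variable {V : Type} {G : SimpleGraph V}

def plusEdge (H : G.Subgraph) (x y : V) : SimpleGraph H.verts :=
  H.coe ⊔ SimpleGraph.fromEdgeSet {e | Sym2.map Subtype.val e = s(x, y)}

variable {H : G.Subgraph} {x y : V}

lemma plusEdge_adj {u v : H.verts} :
    (plusEdge H x y).Adj u v ↔ H.Adj u v ∨ (s((u : V), v) = s(x, y) ∧ u ≠ v) := by
  simp [plusEdge]

lemma map_val_mem_edgeSet_of_mem_plusEdge {e : Sym2 H.verts}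
    (he : e ∈ (plusEdge H x y).edgeSet) (hxy : e.map Subtype.val ≠ s(x, y)) :
    e.map Subtype.val ∈ H.edgeSet := by
  induction e using Sym2.ind with
  | h u v =>
    rw [Sym2.map_mk] at hxy ⊢
    exact (plusEdge_adj.1 he).resolve_right fun h => hxy h.1

lemma exists_mem_of_val_mem_map {e e' : Sym2 H.verts} {w : V}
    (hw : w ∈ e.map Subtype.val) (hw' : w ∈ e'.map Subtype.val) :
    ∃ u : H.verts, u ∈ e ∧ u ∈ e' ∧ (u : V) = w := by
  obtain ⟨u, hu, rfl⟩ := Sym2.mem_map.1 hw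
  obtain ⟨u', hu', hu'u⟩ := Sym2.mem_map.1 hw'
  exact ⟨u, hu, Subtype.ext hu'u ▸ hu', rfl⟩

variable (E : PlaneEmbedding G) {A : Set (ℝ × ℝ)}

lemma PlaneEmbedding.inter_arc_subset_of_mem_edgeSet
    (hAG : A ⊆ ⋃ e ∈ G.edgeSet \ H.edgeSet, E.arc e)
    (hAH : ∀ w ∈ H.verts, E.vmap w ∈ A → w = x ∨ w = y) {e : Sym2 V}
    (he : e ∈ H.edgeSet) :
    A ∩ E.arc e ⊆ {p | ∃ w ∈ s(x, y), w ∈ e ∧ p = E.vmap w} := by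
  rintro p ⟨hpA, hpe⟩
  obtain ⟨e₀, ⟨he₀G, he₀H⟩, hpe₀⟩ := Set.mem_iUnion₂.1 (hAG hpA)
  obtain ⟨w, -, hwe, rfl⟩ := E.arc_meet e₀ he₀G e (H.edgeSet_subset he)
    (fun h => he₀H (h ▸ he)) ⟨hpe₀, hpe⟩
  refine ⟨w, ?_, hwe, rfl⟩
  rcases hAH w (H.mem_verts_of_mem_edge he hwe) hpA with rfl | rfl <;> simp

def PlaneEmbedding.plusEdge (hA : IsArc A (E.vmap x) (E.vmap y))
    (hAG : A ⊆ ⋃ e ∈ G.edgeSet \ H.edgeSet, E.arc e)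
    (hAH : ∀ w ∈ H.verts, E.vmap w ∈ A → w = x ∨ w = y) :
    PlaneEmbedding (plusEdge H x y) where
  vmap v := E.vmap v
  vinj := E.vinj.comp Subtype.val_injective
  arc e := if e.map Subtype.val = s(x, y) then A else E.arc (e.map Subtype.val)
  arc_spec u v huv := by
    split_ifs with hxy
    · rw [Sym2.map_mk] at hxy
      rcases Sym2.eq_iff.1 hxy with ⟨hu, hv⟩ | ⟨hu, hv⟩
      · rwa [hu, hv]
      · rw [hu, hv]; exact hA.symm
    · exact E.arc_spec u v (H.adj_sub ((plusEdge_adj.1 huv).resolve_right fun h => hxy h.1))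
  arc_vertex e he w hw := by
    suffices (w : V) ∈ e.map Subtype.val by
      obtain ⟨u, hu, huw⟩ := Sym2.mem_map.1 this
      exact Subtype.ext huw ▸ hu
    split_ifs at hw with hxy
    · rw [hxy]; rcases hAH w w.2 hw with h | h <;> simp [h]
    · exact E.arc_vertex _ (H.edgeSet_subset (map_val_mem_edgeSet_of_mem_plusEdge he hxy)) w hw
  arc_meet e he e' he' hee' p hp := by
    suffices ∃ w ∈ e.map Subtype.val, w ∈ e'.map Subtype.val ∧ p = E.vmap w by
      obtain ⟨w, hw, hw', rfl⟩ := this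
      obtain ⟨u, hu, hu', rfl⟩ := exists_mem_of_val_mem_map hw hw'
      exact ⟨u, hu, hu', rfl⟩
    have hmap := Sym2.map.injective (Subtype.val_injective (p := (· ∈ H.verts)))
    split_ifs at hp with hxy hxy' hxy'
    · exact absurd (hmap (hxy.trans hxy'.symm)) hee'
    · rw [hxy]
      exact E.inter_arc_subset_of_mem_edgeSet hAG hAH
        (map_val_mem_edgeSet_of_mem_plusEdge he' hxy') hp
    · rw [hxy']
      obtain ⟨w, hw, hw', hpw⟩ := E.inter_arc_subset_of_mem_edgeSet hAG hAH
        (map_val_mem_edgeSet_of_mem_plusEdge he hxy) ⟨hp.2, hp.1⟩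
      exact ⟨w, hw', hw, hpw⟩
    · exact E.arc_meet _ (H.edgeSet_subset (map_val_mem_edgeSet_of_mem_plusEdge he hxy)) _
        (H.edgeSet_subset (map_val_mem_edgeSet_of_mem_plusEdge he' hxy')) (hmap.ne hee') hp

lemma PlaneEmbedding.plusEdge_image_subset (hA : IsArc A (E.vmap x) (E.vmap y))
    (hAG : A ⊆ ⋃ e ∈ G.edgeSet \ H.edgeSet, E.arc e)
    (hAH : ∀ w ∈ H.verts, E.vmap w ∈ A → w = x ∨ w = y) :
    (E.plusEdge hA hAG hAH).image ⊆ E.image := by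
  rintro p (⟨w, rfl⟩ | hp)
  · exact Or.inl ⟨w, rfl⟩
  obtain ⟨e, he, hpe⟩ := Set.mem_iUnion₂.1 hp
  simp only [PlaneEmbedding.plusEdge] at hpe
  split_ifs at hpe with hxy
  · obtain ⟨e₀, ⟨he₀, -⟩, hpe₀⟩ := Set.mem_iUnion₂.1 (hAG hpe)
    exact E.arc_subset_image he₀ hpe₀
  · exact E.arc_subset_image (H.edgeSet_subset (map_val_mem_edgeSet_of_mem_plusEdge he hxy)) hpe

end PlusEdge

section Cuts

variable {V : Type} {G : SimpleGraph V}

lemma OrientedCycle.three_le_card [Fintype V] {m : ℕ} (C : OrientedCycle G m) :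
    3 ≤ Fintype.card V := by
  have : NeZero m := ⟨by have := C.three_le; omega⟩
  have := Fintype.card_le_of_injective C.f C.inj
  rw [ZMod.card] at this
  exact C.three_le.trans this

lemma OrientedCycle.exists_notMem [Finite V] {m : ℕ} (C : OrientedCycle G m) {T : Set V}
    (hT : T.ncard ≤ 2) : ∃ i, C.f i ∉ T := by
  by_contra! h
  have : NeZero m := ⟨by have := C.three_le; omega⟩
  have hle := Set.ncard_le_ncard (Set.range_subset_iff.2 h) T.toFinite
  rw [Set.ncard_range_of_injective C.inj, Nat.card_zmod] at hle
  have := C.three_le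
  omega

lemma isKCut_two_of_isCompOfComplement {T S : Set V} (hT : T.ncard = 2)
    (hS : IsCompOfComplement G T S) {w : V} (hwS : w ∉ S) (hwT : w ∉ T) : IsKCut G 2 T := by
  obtain ⟨⟨s, hs⟩, hST, -, hclosed⟩ := hS
  let K₁ : G.Subgraph := (⊤ : G.Subgraph).induce Sᶜ
  let K₂ : G.Subgraph :=
    { bridgeOf G S with
      verts := S ∪ T
      edge_vert := by
        rintro a b ⟨hab, ha | hb⟩
        · exact Or.inl ha
        · by_cases haT : a ∈ T
          · exact Or.inr haT
          · exact Or.inl (hclosed b hb a haT hab.symm) }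
  have hinter : K₁.verts ∩ K₂.verts = T := by
    ext a
    simp only [K₁, K₂, SimpleGraph.Subgraph.induce_verts, Set.mem_inter_iff, Set.mem_compl_iff,
      Set.mem_union]
    have : a ∈ S → a ∉ T := fun h => Set.disjoint_left.1 hST h
    tauto
  have hw : w ∈ K₁.verts \ K₂.verts := ⟨hwS, by rintro (h | h) <;> contradiction⟩
  have hs' : s ∈ K₂.verts \ K₁.verts := ⟨Or.inl hs, fun h => h hs⟩
  refine ⟨hT, K₁, K₂, ⟨?_, ?_, by rw [hinter, hT], fun h => hw.2 (h.1 hw.1),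
    fun h => hs'.2 (h.1 hs'.1)⟩, hinter, ⟨w, hw⟩, ⟨s, hs'⟩⟩
  · ext a b
    · simp only [K₁, K₂, SimpleGraph.Subgraph.verts_sup, SimpleGraph.Subgraph.induce_verts,
        SimpleGraph.Subgraph.verts_top, Set.mem_union, Set.mem_compl_iff, Set.mem_univ, iff_true]
      tauto
    · simp only [K₁, K₂, SimpleGraph.Subgraph.sup_adj, SimpleGraph.Subgraph.induce_adj,
        SimpleGraph.Subgraph.top_adj, bridgeOf, Set.mem_compl_iff]
      tauto
  · rw [Set.disjoint_left]
    intro e he₁ he₂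
    induction e using Sym2.ind with
    | h a b =>
      simp only [K₁, K₂, SimpleGraph.Subgraph.mem_edgeSet, SimpleGraph.Subgraph.induce_adj,
        bridgeOf] at he₁ he₂
      tauto

end Cuts

section PlusEdgeConnectivity

variable {V : Type} {G : SimpleGraph V} {H : G.Subgraph} {x y : V}

def IsAttachedOnlyAt (H : G.Subgraph) (x y : V) : Prop :=
  ∀ u v, u ∈ H.verts → u ≠ x → u ≠ y → G.Adj u v → H.Adj u v

lemma plusEdge_induce_reachable {S : Set H.verts} {u v : ↥Sᶜ}
    (hu : ((u : H.verts) : V) = x ∨ ((u : H.verts) : V) = y)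
    (hv : ((v : H.verts) : V) = x ∨ ((v : H.verts) : V) = y) :
    ((plusEdge H x y).induce Sᶜ).Reachable u v := by
  by_cases huv : ((u : H.verts) : V) = v
  · rw [Subtype.ext (Subtype.ext huv)]
  refine SimpleGraph.Adj.reachable (show (plusEdge H x y).Adj u v from
    plusEdge_adj.2 (Or.inr ⟨?_, fun h => huv (by rw [h])⟩))
  rcases hu with hu | hu <;> rcases hv with hv | hv <;> rw [hu, hv] at huv ⊢ <;>
    first | exact absurd rfl huv | rfl | exact Sym2.eq_swap

lemma isKConnected_two_plusEdge [Fintype V] (hG : IsKConnected 2 G) (hx : x ∈ H.verts)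
    (hy : y ∈ H.verts) (hxy : x ≠ y)
    (hH : IsAttachedOnlyAt H x y)
    (hcard : 2 < Fintype.card H.verts) : IsKConnected 2 (plusEdge H x y) := by
  refine ⟨hcard, fun S hS => ?_⟩
  have hpair : ¬ ({⟨x, hx⟩, ⟨y, hy⟩} : Set H.verts) ⊆ S := fun h => by
    have := Set.ncard_le_ncard h S.toFinite
    rw [Set.ncard_pair (by simpa [Subtype.ext_iff] using hxy)] at this
    omega
  obtain ⟨t, htS, htxy⟩ : ∃ t : H.verts, t ∉ S ∧ ((t : V) = x ∨ (t : V) = y) := by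
    simp only [Set.insert_subset_iff, Set.singleton_subset_iff, not_and_or] at hpair
    rcases hpair with h | h
    exacts [⟨_, h, Or.inl rfl⟩, ⟨_, h, Or.inr rfl⟩]
  -- Contract `G − H` onto `t`; this maps the connected `G − S` onto `H + xy − S`.
  let f : ↥(Subtype.val '' S)ᶜ → ↥Sᶜ := fun v =>
    if hv : (v : V) ∈ H.verts then ⟨⟨v, hv⟩, fun h => v.2 ⟨_, h, rfl⟩⟩
    else ⟨t, htS⟩
  have hS₀ : (Subtype.val '' S).ncard < 2 := by
    rwa [Set.ncard_image_of_injective _ Subtype.val_injective]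
  refine (hG.2 _ hS₀).of_surjective_of_reachable f (fun u => ⟨⟨u.1.1, ?_⟩, ?_⟩) ?_
  · rintro ⟨w, hw, hwu⟩
    exact u.2 (Subtype.ext hwu ▸ hw)
  · simp [f]
  have hmid : ∀ a b : ↥(Subtype.val '' S)ᶜ, G.Adj a b → (a : V) ∈ H.verts →
      (a : V) ≠ x → (a : V) ≠ y → ((plusEdge H x y).induce Sᶜ).Adj (f a) (f b) := by
    intro a b hab ha hax hay
    have hHab := hH _ _ ha hax hay hab
    simp only [f, dif_pos ha, dif_pos (H.edge_vert hHab.symm)]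
    exact plusEdge_adj.2 (Or.inl hHab)
  have hend : ∀ a : ↥(Subtype.val '' S)ᶜ,
      ((a : V) ∈ H.verts → (a : V) = x ∨ (a : V) = y) →
      (((f a : H.verts)) : V) = x ∨ ((f a : H.verts) : V) = y := by
    intro a ha
    by_cases h : (a : V) ∈ H.verts
    · simpa [f, h] using ha h
    · simpa [f, h] using htxy
  intro a b hab
  by_cases ha : (a : V) ∈ H.verts ∧ (a : V) ≠ x ∧ (a : V) ≠ y
  · exact (hmid a b hab ha.1 ha.2.1 ha.2.2).reachable
  by_cases hb : (b : V) ∈ H.verts ∧ (b : V) ≠ x ∧ (b : V) ≠ y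
  · exact (hmid b a hab.symm hb.1 hb.2.1 hb.2.2).reachable.symm
  exact plusEdge_induce_reachable (hend a (by tauto)) (hend b (by tauto))

lemma IsCompOfComplement.image_val
    (hH : IsAttachedOnlyAt H x y) {T S : Set H.verts}
    (hS : IsCompOfComplement (plusEdge H x y) T S) (hx : x ∉ Subtype.val '' S)
    (hy : y ∉ Subtype.val '' S) :
    IsCompOfComplement G (Subtype.val '' T) (Subtype.val '' S) := by
  obtain ⟨hne, hST, hconn, hclosed⟩ := hS
  have hxy : ∀ u ∈ S, (u : V) ≠ x ∧ (u : V) ≠ y := fun u hu =>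
    ⟨fun h => hx ⟨u, hu, h⟩, fun h => hy ⟨u, hu, h⟩⟩
  refine ⟨hne.image _, (Set.disjoint_image_iff Subtype.val_injective).2 hST, ?_, ?_⟩
  · let φ : (plusEdge H x y).induce S →g G.induce (Subtype.val '' S) :=
      { toFun := fun u => ⟨u.1, u.1, u.2, rfl⟩
        map_rel' := fun {u v} huv => by
          rcases plusEdge_adj.1 huv with h | ⟨h, -⟩
          · exact H.adj_sub h
          · rcases Sym2.eq_iff.1 h with ⟨hu, -⟩ | ⟨hu, -⟩
            exacts [absurd hu (hxy _ u.2).1, absurd hu (hxy _ u.2).2] }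
    refine hconn.map φ ?_
    rintro ⟨-, u, hu, rfl⟩
    exact ⟨⟨u, hu⟩, rfl⟩
  · rintro _ ⟨u, hu, rfl⟩ v hvT huv
    have hHuv := hH _ v u.2 (hxy u hu).1 (hxy u hu).2 huv
    have hv := H.edge_vert hHuv.symm
    exact ⟨⟨v, hv⟩, hclosed u hu ⟨v, hv⟩ (fun h => hvT ⟨_, h, rfl⟩)
      (plusEdge_adj.2 (Or.inl hHuv)), rfl⟩

lemma exists_mem_of_isCompOfComplement_plusEdge [Finite V] {m m' : ℕ} {C : OrientedCycle G m}
    (hGC : ∀ T : Set V, IsKCut G 2 T → ∀ S : Set V, IsCompOfComplement G T S →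
      ∃ i, C.f i ∈ S)
    (hH : IsAttachedOnlyAt H x y)
    {C' : OrientedCycle (plusEdge H x y) m'}
    (hCC' : ∀ j, C.f j ∈ H.verts → ∃ i, (C'.f i : V) = C.f j)
    (hx : ∃ i, (C'.f i : V) = x) (hy : ∃ i, (C'.f i : V) = y) {T S : Set H.verts}
    (hT : T.ncard = 2) (hS : IsCompOfComplement (plusEdge H x y) T S) : ∃ i, C'.f i ∈ S := by
  by_contra! hC'S
  have hoff : ∀ i, (C'.f i : V) ∉ Subtype.val '' S := by
    rintro i ⟨u, hu, hui⟩
    exact hC'S i (Subtype.ext hui ▸ hu)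
  have hCS : ∀ j, C.f j ∉ Subtype.val '' S := by
    rintro j ⟨u, hu, huj⟩
    obtain ⟨i, hi⟩ := hCC' j (huj ▸ u.2)
    exact hoff i (hi ▸ ⟨u, hu, huj⟩)
  obtain ⟨i, hi⟩ := hx
  obtain ⟨i', hi'⟩ := hy
  have hcomp := hS.image_val hH (hi ▸ hoff i) (hi' ▸ hoff i')
  have hT' : (Subtype.val '' T).ncard = 2 := by
    rwa [Set.ncard_image_of_injective _ Subtype.val_injective]
  obtain ⟨j, hj⟩ := C.exists_notMem hT'.le
  obtain ⟨k, hk⟩ := hGC _ (isKCut_two_of_isCompOfComplement hT' hcomp (hCS j) hj) _ hcomp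
  exact hCS k hk

theorem isCircuitGraph_plusEdge [Fintype V] {m m' : ℕ} {C : OrientedCycle G m}
    (hGC : IsCircuitGraph G C) (hxy : x ≠ y)
    (hH : IsAttachedOnlyAt H x y)
    {C' : OrientedCycle (plusEdge H x y) m'}
    (hCC' : ∀ j, C.f j ∈ H.verts → ∃ i, (C'.f i : V) = C.f j)
    (hx : ∃ i, (C'.f i : V) = x) (hy : ∃ i, (C'.f i : V) = y)
    (hE : ∃ E : PlaneEmbedding (plusEdge H x y), C'.IsOuterCycleOf E) :
    IsCircuitGraph (plusEdge H x y) C' := by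
  obtain ⟨i, hi⟩ := hx
  obtain ⟨i', hi'⟩ := hy
  exact ⟨isKConnected_two_plusEdge hGC.1 (hi ▸ (C'.f i).2) (hi' ▸ (C'.f i').2) hxy hH
    C'.three_le_card, hE, fun T hT S hS =>
      exists_mem_of_isCompOfComplement_plusEdge hGC.2.2 hH hCC' ⟨i, hi⟩ ⟨i', hi'⟩ hT.1 hS⟩

end PlusEdgeConnectivity

section CyclePaths

variable {V : Type} {G : SimpleGraph V} {m : ℕ} (C : OrientedCycle G m)

def OrientedCycle.edge (k : ℕ) : Sym2 V := s(C.f k, C.f (k + 1 : ℕ))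

lemma OrientedCycle.edge_mem_edgeSet (k : ℕ) : C.edge k ∈ G.edgeSet := by
  simpa [OrientedCycle.edge] using C.adj k

lemma OrientedCycle.f_natCast_ne {a b : ℕ} (hab : a < b) (hb : b < a + m) :
    C.f a ≠ C.f b := by
  intro h
  have hmod : a ≡ b [MOD m] := (ZMod.natCast_eq_natCast_iff' a b m).1 (C.inj h)
  have := Nat.le_of_dvd (by omega) ((Nat.modEq_iff_dvd' hab.le).1 hmod)
  omega

lemma OrientedCycle.f_natCast_inj {a b : ℕ} (ha : a < m) (hb : b < m) :
    C.f a = C.f b ↔ a = b := by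
  rw [C.inj.eq_iff, ZMod.natCast_eq_natCast_iff', Nat.mod_eq_of_lt ha, Nat.mod_eq_of_lt hb]

lemma PlaneEmbedding.arc_edge_inter_arc_edge_subset (E : PlaneEmbedding G) {a b : ℕ}
    (hab : a < b) (hb : b + 1 < a + m) :
    E.arc (C.edge a) ∩ E.arc (C.edge b) ⊆ {E.vmap (C.f b)} := by
  have h₁ := C.f_natCast_ne hab (by omega)
  have h₂ := C.f_natCast_ne (a := a) (b := b + 1) (by omega) (by omega)
  have h₃ := C.f_natCast_ne (a := a + 1) (b := b + 1) (by omega) (by omega)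
  have hne : C.edge a ≠ C.edge b := fun h => by
    rcases Sym2.eq_iff.1 h with ⟨h, -⟩ | ⟨h, -⟩ <;> contradiction
  intro p hp
  obtain ⟨w, hwa, hwb, rfl⟩ :=
    E.arc_meet _ (C.edge_mem_edgeSet a) _ (C.edge_mem_edgeSet b) hne hp
  simp only [OrientedCycle.edge, Sym2.mem_iff] at hwa hwb
  rcases hwa with rfl | rfl <;> rcases hwb with h | h
  all_goals first | exact congrArg E.vmap h | exact absurd h ‹_›

lemma PlaneEmbedding.isArc_biUnion_arc_edge (E : PlaneEmbedding G) {a n : ℕ} (hn : 0 < n)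
    (hnm : n < m) :
    IsArc (⋃ k ∈ Finset.range n, E.arc (C.edge (a + k))) (E.vmap (C.f a))
      (E.vmap (C.f (a + n : ℕ))) := by
  simpa only [Nat.add_zero] using isArc_biUnion_range (p := fun k => E.vmap (C.f (a + k : ℕ)))
    (B := fun k => E.arc (C.edge (a + k))) hn
    (fun k _ => E.arc_spec _ _ (C.edge_mem_edgeSet (a + k)))
    fun k l hkl hl => E.arc_edge_inter_arc_edge_subset C (by omega) (by omega)

lemma PlaneEmbedding.iUnion_arc_eq_biUnion_range (E : PlaneEmbedding G) :
    ⋃ i, E.arc s(C.f i, C.f (i + 1)) = ⋃ k ∈ Finset.range m, E.arc (C.edge k) := by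
  have : NeZero m := ⟨by have := C.three_le; omega⟩
  rw [Set.iUnion_zmod_eq_biUnion_range]
  simp [OrientedCycle.edge]

end CyclePaths

section Splitting

variable {V : Type} {G : SimpleGraph V}

lemma IsKSeparation.symm {k : ℕ} {G₁ G₂ : G.Subgraph} (h : IsKSeparation G k G₁ G₂) :
    IsKSeparation G k G₂ G₁ :=
  ⟨by rw [sup_comm, h.1], h.2.1.symm, by rw [Set.inter_comm, h.2.2.1], h.2.2.2.2, h.2.2.2.1⟩

lemma IsKSeparation.adj_left {k : ℕ} {G₁ G₂ : G.Subgraph} (h : IsKSeparation G k G₁ G₂)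
    {u v : V} (hu : u ∉ G₂.verts) (huv : G.Adj u v) : G₁.Adj u v := by
  have : (G₁ ⊔ G₂).Adj u v := by rw [h.1]; exact huv
  exact this.resolve_right fun h₂ => hu (G₂.edge_vert h₂)

lemma iUnion_arc_plusEdge_eq {m q : ℕ} {C : OrientedCycle G m} (hq : 2 ≤ q)
    (hqm : q < m) {H : G.Subgraph} {x y : V} (hx : C.f 0 = x) (hy : C.f q = y)
    (E : PlaneEmbedding G) (E₁ : PlaneEmbedding (plusEdge H x y))
    (hE₁ : ∀ e, E₁.arc e = if e.map Subtype.val = s(x, y)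
      then ⋃ k ∈ Finset.range (m - q), E.arc (C.edge (q + k)) else E.arc (e.map Subtype.val))
    (C₁ : OrientedCycle (plusEdge H x y) (q + 1)) (hC₁ : ∀ k ≤ q, (C₁.f k : V) = C.f k) :
    ⋃ i, E₁.arc s(C₁.f i, C₁.f (i + 1)) = ⋃ i, E.arc s(C.f i, C.f (i + 1)) := by
  have hedge : ∀ k < q, s((C₁.f k : V), C₁.f (k + 1)) = C.edge k := fun k hk => by
    rw [← Nat.cast_succ, hC₁ k hk.le, hC₁ (k + 1) hk, OrientedCycle.edge]
  have hlast : s((C₁.f q : V), C₁.f (q + 1)) = s(x, y) := by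
    rw [← Nat.cast_succ, ZMod.natCast_self, hC₁ q le_rfl, ← Nat.cast_zero, hC₁ 0 (by omega),
      Nat.cast_zero, hx, hy, Sym2.eq_swap]
  have hne : ∀ k < q, C.edge k ≠ s(x, y) := fun k hk h => by
    rw [← hx, ← hy, OrientedCycle.edge, ← Nat.cast_zero] at h
    rcases Sym2.eq_iff.1 h with ⟨h₁, h₂⟩ | ⟨h₁, -⟩
    · rw [C.f_natCast_inj (by omega) (by omega)] at h₁ h₂
      omega
    · rw [C.f_natCast_inj (by omega) (by omega)] at h₁
      omega
  rw [Set.iUnion_zmod_eq_biUnion_range, E.iUnion_arc_eq_biUnion_range C, Finset.range_add_one,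
    Finset.set_biUnion_insert, Set.biUnion_range_eq_union_of_le _ hqm.le, Set.union_comm]
  congr 1
  · refine Set.iUnion₂_congr fun k hk => ?_
    have hk := Finset.mem_range.1 hk
    rw [hE₁, Sym2.map_mk, hedge k hk, if_neg (hne k hk)]
  · rw [hE₁, Sym2.map_mk, hlast, if_pos rfl]

theorem isCircuitGraph_plusEdge_of_isKSeparation [Fintype V] {m : ℕ} {C : OrientedCycle G m}
    (hGC : IsCircuitGraph G C) {q : ℕ} (hqm : q < m) {G₁ G₂ : G.Subgraph}
    (hsep : IsKSeparation G 2 G₁ G₂) {x y : V} (hx : C.f 0 = x) (hy : C.f q = y)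
    (hxy : G₁.verts ∩ G₂.verts = {x, y})
    (hyCx_v : ∀ k : ℕ, q ≤ k → k ≤ m → C.f k ∈ G₂.verts)
    (hyCx_e : ∀ k : ℕ, q ≤ k → k < m → G₂.Adj (C.f k) (C.f ((k : ZMod m) + 1)))
    (C₁ : OrientedCycle (plusEdge G₁ x y) (q + 1))
    (htrace : ∀ i : ZMod (q + 1), (C₁.f i : V) = C.f (i.val : ZMod m)) :
    IsCircuitGraph (plusEdge G₁ x y) C₁ := by
  have hq : 2 ≤ q := by have := C₁.three_le; omega
  have hC₁ : ∀ k ≤ q, (C₁.f k : V) = C.f k := fun k hk => by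
    rw [htrace, ZMod.val_cast_of_lt (by omega)]
  have hC₁x : (C₁.f 0 : V) = x := by simpa [hx] using hC₁ 0 (by omega)
  have hxy' : x ≠ y := by
    rw [← hx, ← hy]
    simpa using C.f_natCast_ne (a := 0) (b := q) (by omega) (by omega)
  have hmem : ∀ w ∈ G₁.verts, w ∈ G₂.verts → w = x ∨ w = y := fun w h₁ h₂ => by
    have : w ∈ G₁.verts ∩ G₂.verts := ⟨h₁, h₂⟩
    rwa [hxy] at this
  have hedge : ∀ k < m - q, C.edge (q + k) ∈ G₂.edgeSet := fun k hk => by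
    simpa [OrientedCycle.edge] using hyCx_e (q + k) (by omega) (by omega)
  obtain ⟨E, hCE⟩ := hGC.2.1
  set A := ⋃ k ∈ Finset.range (m - q), E.arc (C.edge (q + k))
  have hA : IsArc A (E.vmap x) (E.vmap y) := by
    have := E.isArc_biUnion_arc_edge C (a := q) (n := m - q) (by omega) (by omega)
    rw [Nat.add_sub_cancel' hqm.le, ZMod.natCast_self, hx, hy] at this
    exact this.symm
  have hAG : A ⊆ ⋃ e ∈ G.edgeSet \ G₁.edgeSet, E.arc e := Set.iUnion₂_subset fun k hk =>
    Set.subset_biUnion_of_mem (u := E.arc) ⟨C.edge_mem_edgeSet _,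
      fun h₁ => Set.disjoint_left.1 hsep.2.1 h₁ (hedge k (Finset.mem_range.1 hk))⟩
  have hAH : ∀ w ∈ G₁.verts, E.vmap w ∈ A → w = x ∨ w = y := fun w hw hwA => by
    obtain ⟨k, hk, hwk⟩ := Set.mem_iUnion₂.1 hwA
    exact hmem w hw (G₂.mem_verts_of_mem_edge (hedge k (Finset.mem_range.1 hk))
      (E.arc_vertex _ (C.edge_mem_edgeSet _) w hwk))
  have hH : IsAttachedOnlyAt G₁ x y := fun u v hu hux huy =>
    hsep.adj_left fun hu₂ => (hmem u hu hu₂).elim hux huy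
  refine isCircuitGraph_plusEdge hGC hxy' hH
    (fun j hj => ?_) ⟨0, hC₁x⟩ ⟨q, by rw [hC₁ q le_rfl, hy]⟩
    ⟨E.plusEdge hA hAG hAH, hCE.of_image_subset (E.plusEdge_image_subset hA hAG hAH)
      (iUnion_arc_plusEdge_eq hq hqm hx hy E _ (fun _ => rfl) C₁ hC₁)⟩
  have : NeZero m := ⟨by omega⟩
  by_cases hjq : j.val ≤ q
  · exact ⟨j.val, by rw [hC₁ _ hjq, ZMod.natCast_zmod_val]⟩
  · rcases hmem _ hj (by simpa using hyCx_v j.val (by omega) j.val_lt.le) with h | h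
    · exact ⟨0, h ▸ hC₁x⟩
    · exact ⟨q, by rw [hC₁ q le_rfl, h, hy]⟩

end Splitting

section Rotation

variable {V : Type} {G : SimpleGraph V} {m : ℕ}

def OrientedCycle.rotate (C : OrientedCycle G m) (r : ZMod m) : OrientedCycle G m where
  f i := C.f (i + r)
  inj := C.inj.comp (add_left_injective r)
  adj i := by simpa only [add_right_comm] using C.adj (i + r)
  three_le := C.three_le

lemma IsCircuitGraph.rotate [Fintype V] {C : OrientedCycle G m} (h : IsCircuitGraph G C)
    (r : ZMod m) : IsCircuitGraph G (C.rotate r) := by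
  obtain ⟨hconn, ⟨E, p, hp, hunb, hfr⟩, hcut⟩ := h
  refine ⟨hconn, ⟨E, p, hp, hunb, ?_⟩, fun T hT S hS => ?_⟩
  · rw [hfr, ← (Equiv.addRight r).surjective.iUnion_comp]
    simp only [OrientedCycle.rotate, Equiv.coe_addRight, add_right_comm _ (1 : ZMod m) r]
  · obtain ⟨i, hi⟩ := hcut T hT S hS
    exact ⟨i - r, by simpa [OrientedCycle.rotate] using hi⟩

end Rotation

theorem circuit_graph_of_two_separation_general
    {V : Type} [Fintype V] (G : SimpleGraph V)
    {m : ℕ} (C : OrientedCycle G m) (hGC : IsCircuitGraph G C)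
    (q : ℕ) (hq0 : 0 < q) (hqm : q < m)
    (G₁ G₂ : G.Subgraph) (hsep : IsKSeparation G 2 G₁ G₂)
    (hxy : G₁.verts ∩ G₂.verts = {C.f 0, C.f (q : ZMod m)})
    (hxCy_v : ∀ k : ℕ, k ≤ q → C.f (k : ZMod m) ∈ G₁.verts)
    (hxCy_e : ∀ k : ℕ, k < q → G₁.Adj (C.f (k : ZMod m)) (C.f ((k : ZMod m) + 1)))
    (hyCx_v : ∀ k : ℕ, q ≤ k → k ≤ m → C.f (k : ZMod m) ∈ G₂.verts)
    (hyCx_e : ∀ k : ℕ, q ≤ k → k < m →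
      G₂.Adj (C.f (k : ZMod m)) (C.f ((k : ZMod m) + 1))) :
    (∀ C₁ : OrientedCycle
        (G₁.coe ⊔ SimpleGraph.fromEdgeSet
          {e : Sym2 G₁.verts |
            Sym2.map (Subtype.val) e = s(C.f 0, C.f (q : ZMod m))}) (q + 1),
      (∀ i : ZMod (q + 1), ((C₁.f i : V) = C.f ((i.val : ℕ) : ZMod m))) →
      IsCircuitGraph _ C₁) ∧
    (∀ C₂ : OrientedCycle
        (G₂.coe ⊔ SimpleGraph.fromEdgeSet
          {e : Sym2 G₂.verts |
            Sym2.map (Subtype.val) e = s(C.f (q : ZMod m), C.f 0)}) (m - q + 1),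
      (∀ i : ZMod (m - q + 1), ((C₂.f i : V) = C.f ((q + i.val : ℕ) : ZMod m))) →
      IsCircuitGraph _ C₂) := by
  refine ⟨fun C₁ htrace => isCircuitGraph_plusEdge_of_isKSeparation hGC hqm hsep rfl rfl hxy
    hyCx_v hyCx_e C₁ htrace, fun C₂ htrace => ?_⟩
  have hrot : ∀ k : ℕ, m ≤ k + q → (C.rotate q).f k = C.f ((k + q - m : ℕ) : ZMod m) :=
    fun k hk => by rw [Nat.cast_sub hk, ZMod.natCast_self, sub_zero, Nat.cast_add]; rfl
  refine isCircuitGraph_plusEdge_of_isKSeparation (hGC.rotate q) (q := m - q) (by omega)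
    hsep.symm (by simp [OrientedCycle.rotate]) ?_ (by rw [Set.inter_comm, hxy, Set.pair_comm])
    (fun k hk hkm => hrot k (by omega) ▸ hxCy_v _ (by omega)) (fun k hk hkm => ?_) C₂
    fun i => by rw [htrace, add_comm]; push_cast; rfl
  · rw [hrot _ (by omega), Nat.sub_add_cancel hqm.le, Nat.sub_self, Nat.cast_zero]
  · have := hxCy_e (k + q - m) (by omega)
    rwa [← hrot k (by omega), Nat.cast_sub (by omega), ZMod.natCast_self, sub_zero,
      Nat.cast_add, add_right_comm] at this

/-- Splitting a circuit graph along a 2-separation.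
Let `(G, C)` be a circuit graph and `(G₁, G₂)` a 2-separation of `G` with
`V(G₁ ∩ G₂) = {x, y} ⊆ V(C)`, `xCy ⊆ G₁` and `yCx ⊆ G₂` (normalized along the
clockwise enumeration: `x = C.f 0` and `y = C.f q` with `0 < q < m`; the clockwise
subpath `xCy` uses indices `0, …, q` and `yCx` uses indices `q, …, m`).
Let `G₁' = G₁ + xy` (a graph on the vertex set of `G₁`) and let
`C₁ = xCy + yx` be the corresponding cycle (any oriented cycle on `q + 1` vertices
tracing `C.f 0, …, C.f q`); similarly `G₂' = G₂ + xy` and `C₂ = yCx + xy`.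
Then `(G₁', C₁)` and `(G₂', C₂)` are circuit graphs. -/
theorem circuit_graph_of_two_separation
    {V : Type} [Fintype V] [DecidableEq V] (G : SimpleGraph V)
    {m : ℕ} (C : OrientedCycle G m) (hGC : IsCircuitGraph G C)
    (q : ℕ) (hq0 : 0 < q) (hqm : q < m)
    (G₁ G₂ : G.Subgraph) (hsep : IsKSeparation G 2 G₁ G₂)
    (hxy : G₁.verts ∩ G₂.verts = {C.f 0, C.f (q : ZMod m)})
    (hxCy_v : ∀ k : ℕ, k ≤ q → C.f (k : ZMod m) ∈ G₁.verts)
    (hxCy_e : ∀ k : ℕ, k < q → G₁.Adj (C.f (k : ZMod m)) (C.f ((k : ZMod m) + 1)))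
    (hyCx_v : ∀ k : ℕ, q ≤ k → k ≤ m → C.f (k : ZMod m) ∈ G₂.verts)
    (hyCx_e : ∀ k : ℕ, q ≤ k → k < m →
      G₂.Adj (C.f (k : ZMod m)) (C.f ((k : ZMod m) + 1))) :
    (∀ C₁ : OrientedCycle
        (G₁.coe ⊔ SimpleGraph.fromEdgeSet
          {e : Sym2 G₁.verts |
            Sym2.map (Subtype.val) e = s(C.f 0, C.f (q : ZMod m))}) (q + 1),
      (∀ i : ZMod (q + 1), ((C₁.f i : V) = C.f ((i.val : ℕ) : ZMod m))) →
      IsCircuitGraph _ C₁) ∧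
    (∀ C₂ : OrientedCycle
        (G₂.coe ⊔ SimpleGraph.fromEdgeSet
          {e : Sym2 G₂.verts |
            Sym2.map (Subtype.val) e = s(C.f (q : ZMod m), C.f 0)}) (m - q + 1),
      (∀ i : ZMod (m - q + 1), ((C₂.f i : V) = C.f ((q + i.val : ℕ) : ZMod m))) →
      IsCircuitGraph _ C₂) :=
  circuit_graph_of_two_separation_general G C hGC q hq0 hqm G₁ G₂ hsep hxy hxCy_v hxCy_e hyCx_v
    hyCx_e

end Paper
end
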